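/- arXiv:1206.0235 — 3 statements merged into one kernel-verified Lean document; each statement's English description precedes it below -/
import Mathlib

section
/- On a countable metric space, every function with values in the extended reals is of Young class LU. -/
/-- Upper semicontinuity in the sense of the paper: all sublevel sets
`{x | f x < t}`, `t ∈ ℝ`, are open. -/
def PaperUSC {X : Type*} [TopologicalSpace X] (f : X → EReal) : Prop :=
  ∀ t : ℝ, IsOpen {x : X | f x < (t : EReal)}

/-- `f` is of Young class LU: it is the pointwise limit of a nondecreasing
sequence of upper semicontinuous functions. -/
def YoungLU {X : Type*} [TopologicalSpace X] (f : X → EReal) : Prop :=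
  ∃ g : ℕ → X → EReal, (∀ n, PaperUSC (g n)) ∧ (∀ x, Monotone fun n => g n x) ∧
    (∀ x, Filter.Tendsto (fun n => g n x) Filter.atTop (nhds (f x)))

/-!
Enumerate `X` injectively by `ℕ` and let `gₙ` agree with `f` on the finitely many points of
index `≤ n` and be `⊥` elsewhere. A function that is `⊥` off a finite set is upper
semicontinuous because its superlevel sets `{t ≤ g}` are finite, hence closed in a
`T1` space; and `gₙ x = f x` as soon as `n` passes the index of `x`.
-/

open Filter

section

variable {X : Type*} [TopologicalSpace X] [T1Space X]

theorem PaperUSC.of_finite_ne_bot {g : X → EReal} (hg : {x | g x ≠ ⊥}.Finite) :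
    PaperUSC g := by
  intro t
  have hfin : {x | (t : EReal) ≤ g x}.Finite :=
    hg.subset fun _ hx => ne_bot_of_le_ne_bot (EReal.coe_ne_bot t) hx
  simpa only [Set.compl_ofPred, not_le] using hfin.isClosed.isOpen_compl

open Classical in
theorem YoungLU.of_finite_exhaustion {s : ℕ → Set X} (hfin : ∀ n, (s n).Finite)
    (hmono : Monotone s) (hcover : ∀ x, ∃ n, x ∈ s n) (f : X → EReal) : YoungLU f := by
  refine ⟨fun n x => if x ∈ s n then f x else ⊥, fun n => ?_, fun x m n hmn => ?_, fun x => ?_⟩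
  · refine PaperUSC.of_finite_ne_bot ((hfin n).subset fun x hx => ?_)
    by_contra hxs
    exact hx (if_neg hxs)
  · by_cases hx : x ∈ s m
    · simp only [if_pos hx, if_pos (hmono hmn hx), le_refl]
    · simp only [if_neg hx, bot_le]
  · obtain ⟨k, hk⟩ := hcover x
    refine tendsto_const_nhds.congr' ?_
    filter_upwards [eventually_ge_atTop k] with n hn
    exact (if_pos (hmono hn hk)).symm

end

/-- On a countable metric space, every extended-real-valued function
is of Young class LU. -/
theorem youngLU_of_countable {X : Type*} [MetricSpace X] [Countable X]
    (f : X → EReal) : YoungLU f := by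
  obtain ⟨e, he⟩ := exists_injective_nat X
  exact YoungLU.of_finite_exhaustion (s := fun n => e ⁻¹' Set.Iic n)
    (fun n => (Set.finite_Iic n).preimage he.injOn)
    (fun _ _ hmn _ hx => le_trans hx hmn) (fun x => ⟨e x, le_refl (e x)⟩) f
end

section
/- Let (X,T) be a topological dynamical system and μ an invariant Borel probability measure. Then rank(μ) ≤ k if and only if rank_ε(μ) ≤ k for all ε > 0; equivalently rank(μ) = lim_{m} rank_{ε_m}(μ) (an increasing limit) for any sequence ε_m decreasing to 0. -/
open MeasureTheory Set
open scoped ENNReal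

variable {X : Type*} [MeasurableSpace X]

/-- `B : Fin k → Set X` (bases) and `n : Fin k → ℕ` (heights) define `k` disjoint
measurable towers for `T`: all level sets `T^i B_l`, `0 ≤ i < n_l`, are measurable
and pairwise disjoint (across all towers). -/
def IsTowerSystem (T : X → X) {k : ℕ} (B : Fin k → Set X) (n : Fin k → ℕ) : Prop :=
  (∀ l, 1 ≤ n l) ∧
  (∀ l, ∀ i < n l, MeasurableSet (T^[i] '' B l)) ∧
  (∀ l l' : Fin k, ∀ i i' : ℕ, i < n l → i' < n l' → (l, i) ≠ (l', i') →
    Disjoint (T^[i] '' B l) (T^[i'] '' B l'))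

/-- The remainder of the `k`-tower partition: the complement of the union of all
level sets. -/
def towerRemainder (T : X → X) {k : ℕ} (B : Fin k → Set X) (n : Fin k → ℕ) : Set X :=
  (⋃ l, ⋃ i ∈ Finset.range (n l), T^[i] '' B l)ᶜ

/-- The collection of elements of the `k`-tower partition associated with the towers:
the level sets together with the remainder. -/
def towerSets (T : X → X) {k : ℕ} (B : Fin k → Set X) (n : Fin k → ℕ) : Set (Set X) :=
  {S | ∃ l : Fin k, ∃ i < n l, S = T^[i] '' B l} ∪ {towerRemainder T B n}

/-- `Ps ≻_ε Qs` : there exists a set `Y` of measure at least `1 - ε` such that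
`Ps` restricted to `Y` refines `Qs` restricted to `Y`. -/
def EpsRefines (μ : Measure X) (Ps Qs : Set (Set X)) (ε : ℝ) : Prop :=
  ∃ Y : Set X, MeasurableSet Y ∧ ENNReal.ofReal (1 - ε) ≤ μ Y ∧
    ∀ A ∈ Ps, ∃ Q ∈ Qs, A ∩ Y ⊆ Q

/-- A finite measurable partition of `X`. -/
def IsFinPartition (Qs : Finset (Set X)) : Prop :=
  (∀ Q ∈ Qs, MeasurableSet Q) ∧ ⋃₀ (Qs : Set (Set X)) = univ ∧
    (Qs : Set (Set X)).Pairwise Disjoint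

/-- `rank μ T ≤ k`: for any finite partition `Qs` and any `ε > 0` there is a
`k`-tower partition `Ps` with remainder of measure `< ε` such that `Ps ≻_ε Qs`. -/
def RankLE (μ : Measure X) (T : X → X) (k : ℕ) : Prop :=
  ∀ Qs : Finset (Set X), IsFinPartition Qs → ∀ ε : ℝ, 0 < ε →
    ∃ (B : Fin k → Set X) (n : Fin k → ℕ), IsTowerSystem T B n ∧
      μ (towerRemainder T B n) < ENNReal.ofReal ε ∧
      EpsRefines μ (towerSets T B n) (↑Qs) ε

/-- The rank of the measure-preserving system `(X, μ, T)`, an element of `ℕ ∪ {∞}`. -/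
noncomputable def rank (μ : Measure X) (T : X → X) : ℕ∞ :=
  sInf {c : ℕ∞ | ∃ k : ℕ, RankLE μ T k ∧ c = k}

section Metric
variable [PseudoMetricSpace X]

/-- `rank_ε(μ) ≤ k`: there is a `k`-tower partition `Ps` with remainder of measure
`< ε` and a set `X_ε` of measure `> 1 - ε` such that all elements of `Ps`
restricted to `X_ε` have diameter `< ε`. -/
def RankEpsLE (μ : Measure X) (T : X → X) (ε : ℝ) (k : ℕ) : Prop :=
  ∃ (B : Fin k → Set X) (n : Fin k → ℕ), IsTowerSystem T B n ∧
    μ (towerRemainder T B n) < ENNReal.ofReal ε ∧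
    ∃ Xe : Set X, MeasurableSet Xe ∧ ENNReal.ofReal (1 - ε) < μ Xe ∧
      ∀ A ∈ towerSets T B n, EMetric.diam (A ∩ Xe) < ENNReal.ofReal ε

/-- The `ε`-rank of `(X, μ, T)`, an element of `ℕ ∪ {∞}`. -/
noncomputable def rankEps (μ : Measure X) (T : X → X) (ε : ℝ) : ℕ∞ :=
  sInf {c : ℕ∞ | ∃ k : ℕ, RankEpsLE μ T ε k ∧ c = k}

end Metric

/-!
Compactness gives finite measurable partitions into sets of diameter `< ε`; a tower partition
refining such a partition on a large set has pieces of diameter `< ε` there, so `rank ≤ k`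
forces `rank_ε ≤ k`. Conversely, approximate each piece of a finite partition `𝒬` from inside
by a closed set. Finitely many disjoint closed sets in a compact space have a Lebesgue number
`δ`: off a set of small measure, every set of diameter `< δ` lies in a single piece of `𝒬`.
Hence the towers witnessing `rank_δ ≤ k` refine `𝒬` relatively, and `rank ≤ k`.
-/

open Function Metric

theorem sInf_natCast_setOf_le_iff {P : ℕ → Prop} {k : ℕ} :
    sInf {c : ℕ∞ | ∃ n : ℕ, P n ∧ c = n} ≤ k ↔ ∃ n ≤ k, P n := by
  refine ⟨fun h => ?_, fun ⟨n, hnk, hn⟩ => ?_⟩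
  · by_contra! hP
    have hlt : ((k + 1 : ℕ) : ℕ∞) ≤ sInf {c : ℕ∞ | ∃ n : ℕ, P n ∧ c = n} := by
      refine le_sInf ?_
      rintro _ ⟨n, hn, rfl⟩
      exact_mod_cast Nat.succ_le_of_lt (lt_of_not_ge fun hnk => hP n hnk hn)
    exact absurd (hlt.trans h) (by norm_cast; omega)
  · exact sInf_le_of_le ⟨n, hn, rfl⟩ (Nat.cast_le.2 hnk)

theorem IsTowerSystem.exists_extend {T : X → X} {k k' : ℕ} {B : Fin k → Set X}
    {n : Fin k → ℕ} (h : IsTowerSystem T B n) (hk : k ≤ k') :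
    ∃ (B' : Fin k' → Set X) (n' : Fin k' → ℕ), IsTowerSystem T B' n' ∧
      towerRemainder T B' n' = towerRemainder T B n ∧
      towerSets T B' n' ⊆ insert ∅ (towerSets T B n) := by
  obtain ⟨m, rfl⟩ := Nat.exists_eq_add_of_le hk
  obtain ⟨hn, hmeas, hdisj⟩ := h
  set B' : Fin (k + m) → Set X := Fin.append B fun _ => ∅
  set n' : Fin (k + m) → ℕ := Fin.append n fun _ => 1
  have hunion : (⋃ l, ⋃ i ∈ Finset.range (n' l), T^[i] '' B' l) =
      ⋃ l, ⋃ i ∈ Finset.range (n l), T^[i] '' B l := by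
    refine subset_antisymm (iUnion_subset fun l => ?_) (iUnion_subset fun l => ?_)
    · induction l using Fin.addCases with
      | left l => exact subset_iUnion_of_subset l (by simp [B', n'])
      | right l => simp [B']
    · exact subset_iUnion_of_subset (Fin.castAdd m l) (by simp [B', n'])
  refine ⟨B', n', ⟨fun l => ?_, fun l => ?_, fun l l' => ?_⟩, ?_, ?_⟩
  · induction l using Fin.addCases <;> simp [n', hn]
  · induction l using Fin.addCases <;> simp [B', n']
    exact hmeas _
  · induction l using Fin.addCases <;> induction l' using Fin.addCases <;> simp [B', n']
    exact fun i i' hi hi' hne => hdisj _ _ i i' hi hi' (by simpa using hne)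
  · simp only [towerRemainder, hunion]
  · rintro S (⟨l, i, hi, rfl⟩ | hS)
    · induction l using Fin.addCases with
      | left l => exact Or.inr (Or.inl ⟨l, i, by simpa [n'] using hi, by simp [B']⟩)
      | right l => exact Or.inl (by simp [B'])
    · rw [mem_singleton_iff, towerRemainder, hunion] at hS
      exact Or.inr (Or.inr hS)

section RankEps

variable [PseudoMetricSpace X] {μ : Measure X} {T : X → X}

theorem RankEpsLE.mono_eps {ε ε' : ℝ} {k : ℕ} (h : RankEpsLE μ T ε k) (hε : ε ≤ ε') :
    RankEpsLE μ T ε' k := by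
  obtain ⟨B, n, hsys, hrem, Xe, hXe, hμXe, hdiam⟩ := h
  exact ⟨B, n, hsys, hrem.trans_le (ENNReal.ofReal_le_ofReal hε), Xe, hXe,
    (ENNReal.ofReal_le_ofReal (by linarith)).trans_lt hμXe,
    fun A hA => (hdiam A hA).trans_le (ENNReal.ofReal_le_ofReal hε)⟩

theorem RankEpsLE.mono_rank {ε : ℝ} {k k' : ℕ} (h : RankEpsLE μ T ε k) (hε : 0 < ε)
    (hk : k ≤ k') : RankEpsLE μ T ε k' := by
  obtain ⟨B, n, hsys, hrem, Xe, hXe, hμXe, hdiam⟩ := h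
  obtain ⟨B', n', hsys', hrem', hsets⟩ := hsys.exists_extend hk
  refine ⟨B', n', hsys', hrem' ▸ hrem, Xe, hXe, hμXe, fun A hA => ?_⟩
  rcases hsets hA with rfl | hA
  · show ediam (∅ ∩ Xe) < _
    simpa using hε
  · exact hdiam A hA

theorem rankEps_le_iff {ε : ℝ} (hε : 0 < ε) {k : ℕ} :
    rankEps μ T ε ≤ k ↔ RankEpsLE μ T ε k := by
  refine sInf_natCast_setOf_le_iff.trans ⟨?_, fun h => ⟨k, le_rfl, h⟩⟩
  rintro ⟨n, hnk, hn⟩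
  exact hn.mono_rank hε hnk

theorem rankEps_anti {ε ε' : ℝ} (hε : ε ≤ ε') : rankEps μ T ε' ≤ rankEps μ T ε :=
  sInf_le_sInf fun _ ⟨n, hn, hc⟩ => ⟨n, hn.mono_eps hε, hc⟩

end RankEps

theorem exists_isFinPartition_subordinate {ι : Type*} [Finite ι] {g : ι → Set X}
    (hg : ∀ i, MeasurableSet (g i)) (hcover : ⋃ i, g i = univ) :
    ∃ Qs : Finset (Set X), IsFinPartition Qs ∧ ∀ Q ∈ Qs, ∃ i, Q ⊆ g i := by
  classical
  obtain ⟨N, ⟨e⟩⟩ := Finite.exists_equiv_fin ι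
  set f : Fin N → Set X := g ∘ e.symm
  refine ⟨Finset.univ.image (disjointed f), ⟨?_, ?_, ?_⟩, ?_⟩
  · simp only [Finset.mem_image, Finset.mem_univ, true_and, forall_exists_index]
    rintro _ i rfl
    exact disjointedRec (fun _ _ ht => ht.diff (hg _)) (hg _)
  · rw [Finset.coe_image, Finset.coe_univ, sUnion_image, biUnion_univ, iUnion_disjointed]
    exact (e.symm.surjective.iUnion_comp g).trans hcover
  · rintro _ hQ _ hQ' hne
    obtain ⟨i, -, rfl⟩ := Finset.mem_image.1 hQ
    obtain ⟨j, -, rfl⟩ := Finset.mem_image.1 hQ'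
    exact disjoint_disjointed f (fun hij => hne (congrArg _ hij))
  · simp only [Finset.mem_image, Finset.mem_univ, true_and, forall_exists_index]
    rintro _ i rfl
    exact ⟨e.symm i, disjointed_subset f i⟩

theorem exists_isFinPartition_ediam_lt [PseudoMetricSpace X] [CompactSpace X]
    [OpensMeasurableSpace X] {ε : ℝ} (hε : 0 < ε) :
    ∃ Qs : Finset (Set X), IsFinPartition Qs ∧ ∀ Q ∈ Qs, ediam Q < ENNReal.ofReal ε := by
  obtain ⟨t, -, ht, hcover⟩ :=
    finite_cover_balls_of_compact (isCompact_univ (X := X)) (by positivity : 0 < ε / 3)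
  have : Finite t := ht
  obtain ⟨Qs, hQs, hsub⟩ :=
    exists_isFinPartition_subordinate (g := fun x : t => ball (x : X) (ε / 3))
      (fun _ => measurableSet_ball)
      (eq_univ_of_univ_subset (by simpa [iUnion_subtype] using hcover))
  refine ⟨Qs, hQs, fun Q hQ => ?_⟩
  obtain ⟨x, hx⟩ := hsub Q hQ
  calc ediam Q ≤ ediam (ball (x : X) (ε / 3)) := ediam_mono hx
    _ ≤ 2 * ENNReal.ofReal (ε / 3) := by rw [← eball_ofReal]; exact ediam_eball_le
    _ < ENNReal.ofReal ε := by
      rw [← ENNReal.ofReal_ofNat 2, ← ENNReal.ofReal_mul zero_le_two,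
        ENNReal.ofReal_lt_ofReal_iff hε]
      linarith

theorem ofReal_one_sub_le_measure_iff {μ : Measure X} [IsProbabilityMeasure μ] {Y : Set X}
    (hY : MeasurableSet Y) {ε : ℝ} (hε : 0 ≤ ε) :
    ENNReal.ofReal (1 - ε) ≤ μ Y ↔ μ Yᶜ ≤ ENNReal.ofReal ε := by
  rw [prob_compl_eq_one_sub hY, ENNReal.ofReal_sub 1 hε, ENNReal.ofReal_one, tsub_le_iff_tsub_le]

theorem IsFinPartition.exists_isClosed_measure_compl_le [TopologicalSpace X]
    [OpensMeasurableSpace X] {μ : Measure X} [IsFiniteMeasure μ] [μ.WeaklyRegular]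
    {Qs : Finset (Set X)} (hQs : IsFinPartition Qs) {η : ℝ≥0∞} (hη : η ≠ 0) :
    ∃ L : Set X → Set X, (∀ Q ∈ Qs, L Q ⊆ Q ∧ IsClosed (L Q)) ∧
      μ (⋃ Q ∈ Qs, L Q)ᶜ ≤ η := by
  have hL : ∀ Q ∈ Qs, ∃ F ⊆ Q, IsClosed F ∧ μ (Q \ F) < η / Qs.card := fun Q hQ =>
    (hQs.1 Q hQ).exists_isClosed_sdiff_lt (measure_ne_top μ Q)
      (ENNReal.div_ne_zero.2 ⟨hη, ENNReal.natCast_ne_top _⟩)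
  choose! L hLQ hLc hLμ using hL
  refine ⟨L, fun Q hQ => ⟨hLQ Q hQ, hLc Q hQ⟩, ?_⟩
  have hcompl : (⋃ Q ∈ Qs, L Q)ᶜ ⊆ ⋃ Q ∈ Qs, Q \ L Q := by
    intro x hx
    obtain ⟨Q, hQ, hxQ⟩ := mem_sUnion.1 (hQs.2.1 ▸ mem_univ x)
    exact mem_biUnion hQ ⟨hxQ, fun hxL => hx (mem_biUnion hQ hxL)⟩
  calc μ (⋃ Q ∈ Qs, L Q)ᶜ ≤ ∑ Q ∈ Qs, μ (Q \ L Q) :=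
        (measure_mono hcompl).trans (measure_biUnion_finset_le _ _)
    _ ≤ Qs.card * (η / Qs.card) := by
        simpa using Finset.sum_le_card_nsmul _ _ _ fun Q hQ => (hLμ Q hQ).le
    _ ≤ η := ENNReal.mul_div_le

theorem exists_pos_inter_iUnion_subset_of_ediam_lt {α ι : Type*} [PseudoMetricSpace α]
    [CompactSpace α] [Finite ι] [Nonempty ι] {L : ι → Set α} (hL : ∀ i, IsClosed (L i))
    (hdisj : Pairwise (Disjoint on L)) :
    ∃ δ > 0, ∀ S : Set α, ediam S < ENNReal.ofReal δ →
      ∃ i, S ∩ ⋃ j, L j ⊆ L i := by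
  set U : ι → Set α := fun i => (⋃ (j) (_ : j ≠ i), L j)ᶜ
  have hU : ∀ i, IsOpen (U i) := fun i =>
    (isClosed_iUnion_of_finite fun j => isClosed_iUnion_of_finite fun _ => hL j).isOpen_compl
  have hLU : ∀ i, L i ⊆ U i := fun i x hx => by
    simp only [U, mem_compl_iff, mem_iUnion, not_exists]
    exact fun j hji hxj => disjoint_left.1 (hdisj hji) hxj hx
  obtain ⟨δ, hδ, hball⟩ := lebesgue_number_lemma_of_metric
    (isClosed_iUnion_of_finite hL).isCompact hU (iUnion_mono hLU)
  refine ⟨δ, hδ, fun S hS => ?_⟩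
  rcases (S ∩ ⋃ j, L j).eq_empty_or_nonempty with h | ⟨x, hxS, hxL⟩
  · exact ⟨Classical.arbitrary ι, h ▸ empty_subset _⟩
  obtain ⟨i, hi⟩ := hball x hxL
  refine ⟨i, fun y ⟨hyS, hyL⟩ => ?_⟩
  obtain ⟨j, hyj⟩ := mem_iUnion.1 hyL
  have hyU : y ∈ U i :=
    hi (mem_ball'.2 (edist_lt_ofReal.1 ((edist_le_ediam_of_mem hxS hyS).trans_lt hS)))
  by_contra hyi
  exact hyU (mem_iUnion₂.2 ⟨j, fun hji => hyi (hji ▸ hyj), hyj⟩)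

theorem IsFinPartition.exists_lebesgue_number [PseudoMetricSpace X] [CompactSpace X]
    [BorelSpace X] [Nonempty X] {μ : Measure X} [IsFiniteMeasure μ] {Qs : Finset (Set X)}
    (hQs : IsFinPartition Qs) {η : ℝ≥0∞} (hη : η ≠ 0) :
    ∃ K, MeasurableSet K ∧ μ Kᶜ ≤ η ∧
      ∃ δ > 0, ∀ S : Set X, ediam S < ENNReal.ofReal δ → ∃ Q ∈ Qs, S ∩ K ⊆ Q := by
  obtain ⟨L, hL, hμL⟩ := hQs.exists_isClosed_measure_compl_le (μ := μ) hη
  have : Nonempty Qs := by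
    obtain ⟨Q, hQ, -⟩ := mem_sUnion.1 (hQs.2.1 ▸ mem_univ (Classical.arbitrary X))
    exact ⟨⟨Q, hQ⟩⟩
  obtain ⟨δ, hδ, hleb⟩ := exists_pos_inter_iUnion_subset_of_ediam_lt
    (L := fun Q : Qs => L Q) (fun Q => (hL Q Q.2).2)
    fun Q Q' hne => (hQs.2.2 Q.2 Q'.2 (Subtype.coe_ne_coe.2 hne)).mono (hL Q Q.2).1 (hL Q' Q'.2).1
  have hK : (⋃ Q : Qs, L Q) = ⋃ Q ∈ Qs, L Q := iUnion_subtype (· ∈ Qs) (fun Q => L Q)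
  refine ⟨⋃ Q ∈ Qs, L Q, Finset.measurableSet_biUnion _ fun Q hQ => (hL Q hQ).2.measurableSet,
    hμL, δ, hδ, fun S hS => ?_⟩
  obtain ⟨Q, hQ⟩ := hleb S hS
  exact ⟨Q, Q.2, hK ▸ hQ.trans (hL Q Q.2).1⟩

section Compact

variable [PseudoMetricSpace X] [CompactSpace X] {μ : Measure X} {T : X → X}

theorem RankLE.rankEpsLE [OpensMeasurableSpace X] {k : ℕ} (h : RankLE μ T k) {ε : ℝ}
    (hε : 0 < ε) : RankEpsLE μ T ε k := by
  obtain ⟨Qs, hQs, hdiam⟩ := exists_isFinPartition_ediam_lt (X := X) hε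
  -- `ε' < 1` keeps `ENNReal.ofReal (1 - ε')` positive, which matters when `1 ≤ ε`
  obtain ⟨ε', hε', hε'min⟩ := exists_between (lt_min hε one_pos)
  obtain ⟨hε'ε, hε'1⟩ := lt_min_iff.1 hε'min
  obtain ⟨B, n, hsys, hrem, Y, hY, hμY, href⟩ := h Qs hQs ε' hε'
  refine ⟨B, n, hsys, hrem.trans ((ENNReal.ofReal_lt_ofReal_iff hε).2 hε'ε), Y, hY,
    (ENNReal.ofReal_lt_ofReal_iff'.2 ⟨by linarith, by linarith⟩).trans_le hμY,
    fun A hA => ?_⟩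
  obtain ⟨Q, hQ, hAQ⟩ := href A hA
  exact (ediam_mono hAQ).trans_lt (hdiam Q hQ)

theorem rankEps_le_rank [OpensMeasurableSpace X] {ε : ℝ} (hε : 0 < ε) :
    rankEps μ T ε ≤ rank μ T :=
  le_sInf fun _ ⟨n, hn, hc⟩ => hc ▸ sInf_le ⟨n, hn.rankEpsLE hε, rfl⟩

theorem rankLE_of_forall_rankEpsLE [BorelSpace X] [IsProbabilityMeasure μ] {k : ℕ}
    (h : ∀ δ > 0, RankEpsLE μ T δ k) : RankLE μ T k := by
  intro Qs hQs ε hε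
  have := nonempty_of_isProbabilityMeasure μ
  obtain ⟨K, hK, hμK, δ₀, hδ₀, hleb⟩ :=
    hQs.exists_lebesgue_number (μ := μ) (η := ENNReal.ofReal (ε / 2)) (by simpa using hε)
  set δ := min (ε / 2) δ₀
  obtain ⟨B, n, hsys, hrem, Xe, hXe, hμXe, hdiam⟩ := h δ (lt_min (by linarith) hδ₀)
  have hδε : δ ≤ ε / 2 := min_le_left _ _
  have hμXe' : μ Xeᶜ ≤ ENNReal.ofReal (ε / 2) :=
    ((ofReal_one_sub_le_measure_iff hXe (by positivity)).1 hμXe.le).trans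
      (ENNReal.ofReal_le_ofReal hδε)
  refine ⟨B, n, hsys, hrem.trans_le (ENNReal.ofReal_le_ofReal (by linarith)), Xe ∩ K,
    hXe.inter hK, ?_, fun A hA => ?_⟩
  · rw [ofReal_one_sub_le_measure_iff (hXe.inter hK) hε.le, compl_inter]
    calc μ (Xeᶜ ∪ Kᶜ) ≤ ENNReal.ofReal (ε / 2) + ENNReal.ofReal (ε / 2) :=
          (measure_union_le _ _).trans (add_le_add hμXe' hμK)
      _ = ENNReal.ofReal ε := by
          rw [← ENNReal.ofReal_add (by positivity) (by positivity), add_halves]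
  · obtain ⟨Q, hQ, hsub⟩ :=
      hleb (A ∩ Xe) ((hdiam A hA).trans_le (ENNReal.ofReal_le_ofReal (min_le_right _ _)))
    exact ⟨Q, hQ, by rwa [inter_assoc] at hsub⟩

theorem rank_le_iff_forall_rankEps_le [BorelSpace X] [IsProbabilityMeasure μ] {k : ℕ} :
    rank μ T ≤ k ↔ ∀ ε : ℝ, 0 < ε → rankEps μ T ε ≤ k :=
  ⟨fun h _ hε => (rankEps_le_rank hε).trans h, fun h => sInf_le
    ⟨k, rankLE_of_forall_rankEpsLE fun ε hε => (rankEps_le_iff hε).1 (h ε hε), rfl⟩⟩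

end Compact

theorem rank_eq_lim_rankEps_general {X : Type*} [MeasurableSpace X] [MetricSpace X] [CompactSpace X]
    [BorelSpace X] (T : X → X)
    (μ : Measure X) [IsProbabilityMeasure μ] :
    (∀ k : ℕ, rank μ T ≤ (k : ℕ∞) ↔ ∀ ε : ℝ, 0 < ε → rankEps μ T ε ≤ (k : ℕ∞)) ∧
    (∀ e : ℕ → ℝ, (∀ m, 0 < e m) → Antitone e →
      Filter.Tendsto e Filter.atTop (nhds 0) →
      rank μ T = ⨆ m, rankEps μ T (e m)) := by
  refine ⟨fun k => rank_le_iff_forall_rankEps_le, fun e he _ he0 =>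
    le_antisymm ?_ (iSup_le fun m => rankEps_le_rank (he m))⟩
  induction h : ⨆ m, rankEps μ T (e m) using ENat.recTopCoe with
  | top => exact le_top
  | coe k =>
    refine rank_le_iff_forall_rankEps_le.2 fun ε hε => ?_
    obtain ⟨m, hm⟩ := (he0.eventually_lt_const hε).exists
    exact (rankEps_anti hm.le).trans (h ▸ le_iSup (fun m => rankEps μ T (e m)) m)

/-- `rank(μ) ≤ k` iff `rank_ε(μ) ≤ k` for every `ε > 0`; equivalently, for any
sequence `ε_m ↓ 0`, `rank(μ)` is the increasing limit (supremum) of `rank_{ε_m}(μ)`. -/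
theorem rank_eq_lim_rankEps {X : Type*} [MeasurableSpace X] [MetricSpace X] [CompactSpace X]
    [BorelSpace X] (T : X → X) (hT : Continuous T)
    (μ : Measure X) [IsProbabilityMeasure μ] (hinv : MeasurePreserving T μ μ) :
    (∀ k : ℕ, rank μ T ≤ (k : ℕ∞) ↔ ∀ ε : ℝ, 0 < ε → rankEps μ T ε ≤ (k : ℕ∞)) ∧
    (∀ e : ℕ → ℝ, (∀ m, 0 < e m) → Antitone e →
      Filter.Tendsto e Filter.atTop (nhds 0) →
      rank μ T = ⨆ m, rankEps μ T (e m)) :=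
  rank_eq_lim_rankEps_general T μ
end

section
/- Let (X,T) be an invertible topological dynamical system (T a homeomorphism of a compact metric space). For every ε > 0, the function μ ↦ rank_ε(μ) from 𝓜_T(X) (with the weak-star topology) to ℕ ∪ {∞} is upper semicontinuous. -/
open MeasureTheory Set
open scoped ENNReal

variable {X : Type*} [MeasurableSpace X]

/-!
Every requirement in `RankEpsLE μ T ε k` except the two measure bounds is independent of `μ`, and
by the portmanteau theorem the bounds `μ R < ε` and `1 - ε < μ Xε` persist under weak-*
perturbation as soon as the remainder `R` is closed and `Xε` is open. It therefore suffices to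
replace any witness by one whose levels and good set are open. Approximate the bases of the towers,
and the pieces of the partition inside `Xε`, from within by compact sets, and take small metric
thickenings of them: for a small enough radius, thickenings of disjoint compact sets stay disjoint
and diameters grow by as little as we like, while only a small amount of mass is lost.
-/

open MeasureTheory Set Filter Metric Function
open scoped NNReal Topology

theorem eventually_pairwise_disjoint_thickening {α ι : Type*} [MetricSpace α] [Finite ι]
    {K : ι → Set α} (hK : ∀ i, IsCompact (K i)) (hd : Pairwise (Disjoint on K)) :
    ∀ᶠ η in 𝓝[>] (0 : ℝ), Pairwise (Disjoint on fun i => thickening η (K i)) := by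
  have key (i j : ι) : ∀ᶠ η in 𝓝[>] (0 : ℝ),
      i ≠ j → Disjoint (thickening η (K i)) (thickening η (K j)) := by
    by_cases hij : i = j
    · exact .of_forall fun _ h => absurd hij h
    obtain ⟨r, hr, h⟩ := (hd hij).exists_thickenings (hK i) (hK j).isClosed
    filter_upwards [Ioc_mem_nhdsGT hr] with η hη _
    exact h.mono (thickening_mono hη.2 _) (thickening_mono hη.2 _)
  filter_upwards [eventually_all.2 fun i => eventually_all.2 (key i)] with η hη i j
  exact hη i j

theorem eventually_ediam_thickening_lt {α : Type*} [PseudoMetricSpace α] {s : Set α}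
    {c : ℝ≥0∞} (h : ediam s < c) : ∀ᶠ η in 𝓝[>] (0 : ℝ), ediam (thickening η s) < c := by
  have hlim : Tendsto (fun η : ℝ => ediam s + 2 * ENNReal.ofReal η) (𝓝[>] 0) (𝓝 (ediam s)) := by
    have h0 : Tendsto ENNReal.ofReal (𝓝[>] 0) (𝓝 0) :=
      ENNReal.ofReal_zero ▸ (ENNReal.continuous_ofReal.tendsto 0).mono_left nhdsWithin_le_nhds
    simpa using tendsto_const_nhds.add (ENNReal.Tendsto.const_mul h0 (.inr ENNReal.ofNat_ne_top))
  filter_upwards [hlim.eventually_lt_const h, self_mem_nhdsWithin] with η hη (hη0 : 0 < η)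
  calc ediam (thickening η s) = ediam (thickening (η.toNNReal : ℝ) s) := by
        rw [Real.coe_toNNReal _ hη0.le]
    _ ≤ ediam s + 2 * η.toNNReal := ediam_thickening_le _
    _ < c := hη

theorem exists_isCompact_subset_measure_iUnion_sdiff_lt {α ι : Type*} [TopologicalSpace α]
    [T2Space α] [MeasurableSpace α] [OpensMeasurableSpace α] {μ : Measure α} [IsFiniteMeasure μ]
    [μ.InnerRegularCompactLTTop] [Countable ι] {S : ι → Set α} (hS : ∀ i, MeasurableSet (S i))
    {δ : ℝ≥0∞} (hδ : δ ≠ 0) :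
    ∃ K : ι → Set α, (∀ i, K i ⊆ S i) ∧ (∀ i, IsCompact (K i)) ∧ μ (⋃ i, S i \ K i) < δ := by
  obtain ⟨δ', hδ'0, hδ'⟩ := ENNReal.exists_pos_sum_of_countable' hδ ι
  choose K hKS hK hμK using fun i =>
    (hS i).exists_isCompact_sdiff_lt (measure_ne_top μ _) (hδ'0 i).ne'
  exact ⟨K, hKS, hK,
    (measure_iUnion_le _).trans_lt ((ENNReal.tsum_le_tsum fun i => (hμK i).le).trans_lt hδ')⟩

theorem Homeomorph.image_iterate_eq_preimage {α : Type*} [TopologicalSpace α] (T : α ≃ₜ α)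
    (i : ℕ) (s : Set α) : T^[i] '' s = T.symm^[i] ⁻¹' s := by
  rw [image_eq_preimage_of_inverse (LeftInverse.iterate T.symm_apply_apply i)
    (LeftInverse.iterate T.apply_symm_apply i)]

theorem Homeomorph.isOpen_image_iterate {α : Type*} [TopologicalSpace α] (T : α ≃ₜ α)
    (i : ℕ) {s : Set α} (hs : IsOpen s) : IsOpen (T^[i] '' s) := by
  rw [T.image_iterate_eq_preimage]
  exact hs.preimage (T.symm.continuous.iterate i)

section Portmanteau

variable {Ω : Type*} [MeasurableSpace Ω] [TopologicalSpace Ω] [OpensMeasurableSpace Ω]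
  [HasOuterApproxClosed Ω] {μ : ProbabilityMeasure Ω} {c : ℝ≥0∞}

theorem ProbabilityMeasure.eventually_measure_lt_of_isClosed {F : Set Ω} (hF : IsClosed F)
    (h : (μ : Measure Ω) F < c) : ∀ᶠ ν : ProbabilityMeasure Ω in 𝓝 μ, (ν : Measure Ω) F < c :=
  eventually_lt_of_limsup_lt
    ((ProbabilityMeasure.limsup_measure_closed_le_of_tendsto tendsto_id hF).trans_lt h)

theorem ProbabilityMeasure.eventually_lt_measure_of_isOpen {G : Set Ω} (hG : IsOpen G)
    (h : c < (μ : Measure Ω) G) : ∀ᶠ ν : ProbabilityMeasure Ω in 𝓝 μ, c < (ν : Measure Ω) G :=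
  eventually_lt_of_lt_liminf
    (h.trans_le (ProbabilityMeasure.le_liminf_measure_open_of_tendsto tendsto_id hG))

end Portmanteau

section Towers

variable {α : Type*} {k : ℕ}

def towerLevel (T : α → α) (B : Fin k → Set α) (n : Fin k → ℕ) (p : Σ l, Fin (n l)) : Set α :=
  T^[p.2] '' B p.1

def towerPiece (T : α → α) (B : Fin k → Set α) (n : Fin k → ℕ) :
    Option (Σ l, Fin (n l)) → Set α
  | none => towerRemainder T B n
  | some p => towerLevel T B n p

variable {T : α → α} {B : Fin k → Set α} {n : Fin k → ℕ}

theorem towerRemainder_eq_compl_iUnion :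
    towerRemainder T B n = (⋃ p, towerLevel T B n p)ᶜ := by
  simp only [towerRemainder, towerLevel, iUnion_sigma]
  congr! with l
  ext x
  simp [Fin.exists_iff]

theorem towerSets_eq_range_towerPiece : towerSets T B n = range (towerPiece T B n) := by
  ext A
  simp [towerSets, towerPiece, towerLevel, Option.exists, Fin.exists_iff, eq_comm]

theorem iUnion_towerPiece : ⋃ a, towerPiece T B n a = univ := by
  rw [iUnion_option, towerPiece, towerRemainder_eq_compl_iUnion]
  exact compl_union_self _

theorem isClosed_towerRemainder [TopologicalSpace α] (h : ∀ p, IsOpen (towerLevel T B n p)) :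
    IsClosed (towerRemainder T B n) := by
  rw [towerRemainder_eq_compl_iUnion]
  exact (isOpen_iUnion h).isClosed_compl

variable [MeasurableSpace α]

theorem IsTowerSystem.measurableSet_base (h : IsTowerSystem T B n) (l : Fin k) :
    MeasurableSet (B l) := by
  simpa using h.2.1 l 0 (h.1 l)

theorem IsTowerSystem.pairwise_disjoint_towerLevel (h : IsTowerSystem T B n) :
    Pairwise (Disjoint on towerLevel T B n) := by
  rintro ⟨l, i⟩ ⟨l', i'⟩ hne
  refine h.2.2 l l' i i' i.2 i'.2 fun heq => hne ?_
  obtain ⟨rfl, hi⟩ := Prod.mk.inj heq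
  rw [Fin.ext hi]

theorem IsTowerSystem.pairwise_disjoint_towerPiece (h : IsTowerSystem T B n) :
    Pairwise (Disjoint on towerPiece T B n) := by
  have hR (q : Σ l, Fin (n l)) : Disjoint (towerRemainder T B n) (towerLevel T B n q) := by
    rw [towerRemainder_eq_compl_iUnion]
    exact disjoint_compl_left.mono_right (subset_iUnion (towerLevel T B n) q)
  rintro (_ | p) (_ | q) hne
  · exact absurd rfl hne
  · exact hR q
  · exact (hR p).symm
  · exact h.pairwise_disjoint_towerLevel fun e => hne (congrArg some e)

theorem IsTowerSystem.measurableSet_towerPiece (h : IsTowerSystem T B n) :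
    ∀ a, MeasurableSet (towerPiece T B n a)
  | none => by
    rw [towerPiece, towerRemainder_eq_compl_iUnion]
    exact (MeasurableSet.iUnion fun p : Σ l, Fin (n l) => h.2.1 p.1 p.2 p.2.2).compl
  | some p => h.2.1 p.1 p.2 p.2.2

theorem isTowerSystem_of_pairwise_disjoint (hn : ∀ l, 1 ≤ n l)
    (hm : ∀ p, MeasurableSet (towerLevel T B n p)) (hd : Pairwise (Disjoint on towerLevel T B n)) :
    IsTowerSystem T B n := by
  refine ⟨hn, fun l i hi => hm ⟨l, i, hi⟩, fun l l' i i' hi hi' hne => ?_⟩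
  exact hd (i := ⟨l, i, hi⟩) (j := ⟨l', i', hi'⟩) fun heq => by cases heq; exact hne rfl

end Towers

section ThickenedTower

variable {α : Type*} [MetricSpace α] {T : α → α} {k : ℕ} {n : Fin k → ℕ}

def thickenedTowerBase (T : α → α) (K : Fin k → Set α) (n : Fin k → ℕ) (η : ℝ) (l : Fin k) :
    Set α :=
  ⋂ j : Fin (n l), T^[j] ⁻¹' thickening η (towerLevel T K n ⟨l, j⟩)

variable {K : Fin k → Set α} {η : ℝ}

theorem towerLevel_thickenedTowerBase_subset_thickening (p : Σ l, Fin (n l)) :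
    towerLevel T (thickenedTowerBase T K n η) n p ⊆ thickening η (towerLevel T K n p) :=
  (image_mono (iInter_subset _ p.2)).trans (image_preimage_subset _ _)

theorem towerLevel_subset_towerLevel_thickenedTowerBase (hη : 0 < η) (p : Σ l, Fin (n l)) :
    towerLevel T K n p ⊆ towerLevel T (thickenedTowerBase T K n η) n p :=
  image_mono fun _ hx => mem_iInter.2 fun _ => self_subset_thickening hη _ (mem_image_of_mem _ hx)

theorem isOpen_thickenedTowerBase (hT : Continuous T) (l : Fin k) :
    IsOpen (thickenedTowerBase T K n η l) :=
  isOpen_iInter_of_finite fun _ => isOpen_thickening.preimage (hT.iterate _)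

theorem towerRemainder_thickenedTowerBase_subset {B : Fin k → Set α} (hη : 0 < η) :
    towerRemainder T (thickenedTowerBase T K n η) n ⊆
      towerRemainder T B n ∪ ⋃ p, towerLevel T B n p \ towerLevel T K n p := by
  intro x hx
  rw [towerRemainder_eq_compl_iUnion] at hx ⊢
  refine or_iff_not_imp_left.2 fun hxR => ?_
  obtain ⟨p, hxp⟩ := mem_iUnion.1 (notMem_compl_iff.1 hxR)
  exact mem_iUnion.2 ⟨p, hxp, fun hxK =>
    hx (mem_iUnion.2 ⟨p, towerLevel_subset_towerLevel_thickenedTowerBase hη p hxK⟩)⟩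

end ThickenedTower

section OpenTower

variable {α : Type*} [MetricSpace α] [MeasurableSpace α] {k : ℕ} {B : Fin k → Set α}
  {n : Fin k → ℕ} {K : Fin k → Set α} {C : Option (Σ l, Fin (n l)) → Set α} {c : ℝ≥0∞}

theorem IsTowerSystem.exists_thickening_radius (T : α ≃ₜ α) (hT : IsTowerSystem T B n)
    (hK : ∀ l, IsCompact (K l)) (hKB : ∀ l, K l ⊆ B l) (hC : ∀ a, IsCompact (C a))
    (hCB : ∀ a, C a ⊆ towerPiece T B n a) (hCc : ∀ a, ediam (C a) < c) :
    ∃ η > 0, Pairwise (Disjoint on fun a : Option (Σ l, Fin (n l)) =>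
        thickening η (a.elim (C none) (towerLevel T K n))) ∧
      ∀ a, ediam (thickening η (C a)) < c := by
  let core : Option (Σ l, Fin (n l)) → Set α := fun a => a.elim (C none) (towerLevel T K n)
  have hcore : ∀ a, IsCompact (core a) := by
    rintro (_ | p)
    exacts [hC none, (hK p.1).image (T.continuous.iterate _)]
  have hcoreB : ∀ a, core a ⊆ towerPiece T B n a := by
    rintro (_ | p)
    exacts [hCB none, image_mono (hKB p.1)]
  obtain ⟨η, hdisj, hdiam, hη⟩ := ((eventually_pairwise_disjoint_thickening hcore
    fun a b hab => (hT.pairwise_disjoint_towerPiece hab).mono (hcoreB a) (hcoreB b)).and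
    ((eventually_all.2 fun a => eventually_ediam_thickening_lt (hCc a)).and
      self_mem_nhdsWithin)).exists
  exact ⟨η, hη, hdisj, hdiam⟩

theorem IsTowerSystem.exists_isOpen_of_isCompact [OpensMeasurableSpace α] (T : α ≃ₜ α)
    (hT : IsTowerSystem T B n) (hK : ∀ l, IsCompact (K l)) (hKB : ∀ l, K l ⊆ B l)
    (hC : ∀ a, IsCompact (C a)) (hCB : ∀ a, C a ⊆ towerPiece T B n a)
    (hCc : ∀ a, ediam (C a) < c) :
    ∃ (B' : Fin k → Set α) (U : Set α), IsTowerSystem T B' n ∧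
      (∀ p, IsOpen (towerLevel T B' n p)) ∧ IsOpen U ∧
      towerRemainder T B' n ⊆
        towerRemainder T B n ∪ ⋃ p, towerLevel T B n p \ towerLevel T K n p ∧
      (⋃ a, C a) \ (⋃ p, towerLevel T B n p \ towerLevel T K n p) ⊆ U ∧
      ∀ A ∈ towerSets T B' n, ediam (A ∩ U) < c := by
  obtain ⟨η, hη, hdisj, hdiam⟩ := hT.exists_thickening_radius T hK hKB hC hCB hCc
  set B' := thickenedTowerBase T K n η
  have hlev_open (p : Σ l, Fin (n l)) : IsOpen (towerLevel T B' n p) :=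
    T.isOpen_image_iterate _ (isOpen_thickenedTowerBase T.continuous _)
  have hlev_disj : Pairwise (Disjoint on towerLevel T B' n) :=
    fun p q hpq => (hdisj (Option.some_injective _ |>.ne hpq)).mono
      (towerLevel_thickenedTowerBase_subset_thickening p)
      (towerLevel_thickenedTowerBase_subset_thickening q)
  -- Inside each new level `U` keeps only points near the compact of the same piece, so that every
  -- new piece meets `U` only near its own compact.
  set U := (⋃ p, thickening η (C (some p)) ∩ towerLevel T B' n p) ∪ thickening η (C none)
  refine ⟨B', U, isTowerSystem_of_pairwise_disjoint hT.1 (fun p => (hlev_open p).measurableSet)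
    hlev_disj, hlev_open, (isOpen_iUnion fun p => isOpen_thickening.inter (hlev_open p)).union
    isOpen_thickening, towerRemainder_thickenedTowerBase_subset hη, ?_, ?_⟩
  · rintro x ⟨hxC, hxL⟩
    obtain ⟨_ | p, hxa⟩ := mem_iUnion.1 hxC
    · exact Or.inr (self_subset_thickening hη _ hxa)
    · have hxK : x ∈ towerLevel T K n p :=
        by_contra fun hxK => hxL (mem_iUnion.2 ⟨p, hCB _ hxa, hxK⟩)
      exact Or.inl (mem_iUnion.2 ⟨p, self_subset_thickening hη _ hxa,
        towerLevel_subset_towerLevel_thickenedTowerBase hη p hxK⟩)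
  · rw [towerSets_eq_range_towerPiece, forall_mem_range]
    refine fun a => lt_of_le_of_lt (ediam_mono ?_) (hdiam a)
    rcases a with _ | p
    · rintro x ⟨hxR, hxU | hxU⟩
      · obtain ⟨q, -, hxq⟩ := mem_iUnion.1 hxU
        rw [towerPiece, towerRemainder_eq_compl_iUnion] at hxR
        exact absurd (mem_iUnion.2 ⟨q, hxq⟩) hxR
      · exact hxU
    · rintro x ⟨hxp, hxU | hxU⟩
      · obtain ⟨q, hxC, hxq⟩ := mem_iUnion.1 hxU
        obtain rfl : p = q := by_contra fun hpq => disjoint_left.1 (hlev_disj hpq) hxp hxq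
        exact hxC
      · exact absurd hxU <| disjoint_left.1 (hdisj (Option.some_ne_none p))
          (towerLevel_thickenedTowerBase_subset_thickening p hxp)

end OpenTower

theorem exists_isCompact_subset_measure_iUnion_towerLevel_sdiff_lt {α : Type*}
    [TopologicalSpace α] [PolishSpace α] [MeasurableSpace α] [BorelSpace α] (μ : Measure α)
    [IsFiniteMeasure μ] (T : α ≃ₜ α) {k : ℕ} {B : Fin k → Set α} (hB : ∀ l, MeasurableSet (B l))
    (n : Fin k → ℕ) {δ : ℝ≥0∞} (hδ : δ ≠ 0) :
    ∃ K : Fin k → Set α, (∀ l, K l ⊆ B l) ∧ (∀ l, IsCompact (K l)) ∧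
      μ (⋃ p, towerLevel T B n p \ towerLevel T K n p) < δ := by
  -- `ν` charges a set with the total `μ`-mass of its images at all tower heights.
  let ν := Measure.sum fun p : Σ l, Fin (n l) => μ.map T.symm^[p.2]
  obtain ⟨K, hKB, hK, hνK⟩ := exists_isCompact_subset_measure_iUnion_sdiff_lt (μ := ν) hB hδ
  refine ⟨K, hKB, hK, ?_⟩
  set E := ⋃ l, B l \ K l
  have hE : MeasurableSet E := .iUnion fun l => (hB l).diff (hK l).measurableSet
  calc μ (⋃ p, towerLevel T B n p \ towerLevel T K n p)
      ≤ μ (⋃ p : Σ l, Fin (n l), T^[p.2] '' E) := by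
        refine measure_mono <| iUnion_mono fun p => ?_
        rw [towerLevel, towerLevel, ← image_sdiff (T.injective.iterate _)]
        exact image_mono (subset_iUnion (fun l => B l \ K l) p.1)
    _ ≤ ∑' p : Σ l, Fin (n l), μ (T^[p.2] '' E) := measure_iUnion_le _
    _ = ν E := by
        rw [Measure.sum_apply _ hE]
        refine tsum_congr fun p => ?_
        rw [Measure.map_apply (T.symm.continuous.iterate _).measurable hE,
          T.image_iterate_eq_preimage]
    _ < δ := hνK

section Regularity

variable {α : Type*} [MetricSpace α] [PolishSpace α] [MeasurableSpace α] [BorelSpace α]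
  {T : α ≃ₜ α} {ε : ℝ} {k : ℕ}

theorem RankEpsLE.exists_isOpen {μ : Measure α} [IsFiniteMeasure μ] (h : RankEpsLE μ T ε k) :
    ∃ (B : Fin k → Set α) (n : Fin k → ℕ), IsTowerSystem T B n ∧
      IsClosed (towerRemainder T B n) ∧ μ (towerRemainder T B n) < ENNReal.ofReal ε ∧
      ∃ U, IsOpen U ∧ ENNReal.ofReal (1 - ε) < μ U ∧
        ∀ A ∈ towerSets T B n, ediam (A ∩ U) < ENNReal.ofReal ε := by
  obtain ⟨B, n, hT, hR, Xe, hXe, hμXe, hdiam⟩ := h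
  set δ := min (ENNReal.ofReal ε - μ (towerRemainder T B n)) (μ Xe - ENNReal.ofReal (1 - ε))
  have hδ : δ / 2 ≠ 0 :=
    (ENNReal.half_pos (lt_min (tsub_pos_of_lt hR) (tsub_pos_of_lt hμXe)).ne').ne'
  obtain ⟨K, hKB, hK, hμK⟩ :=
    exists_isCompact_subset_measure_iUnion_towerLevel_sdiff_lt μ T hT.measurableSet_base n hδ
  obtain ⟨C, hCB, hC, hμC⟩ := exists_isCompact_subset_measure_iUnion_sdiff_lt (μ := μ)
    (fun a => (hT.measurableSet_towerPiece a).inter hXe) hδ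
  rw [towerSets_eq_range_towerPiece, forall_mem_range] at hdiam
  obtain ⟨B', U, hT', hlev, hU, hR', hgood, hdiam'⟩ := hT.exists_isOpen_of_isCompact T hK hKB hC
    (fun a => (hCB a).trans inter_subset_left) (fun a => (ediam_mono (hCB a)).trans_lt (hdiam a))
  set L := ⋃ p, towerLevel T B n p \ towerLevel T K n p
  set M := ⋃ a, (towerPiece T B n a ∩ Xe) \ C a
  have hXeU : Xe ⊆ U ∪ (L ∪ M) := fun x hx => by
    obtain ⟨a, hxa⟩ := mem_iUnion.1 (iUnion_towerPiece.ge (mem_univ x))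
    by_cases hxC : x ∈ C a
    · exact (em (x ∈ L)).elim (Or.inr ∘ Or.inl) fun hxL =>
        Or.inl (hgood ⟨mem_iUnion.2 ⟨a, hxC⟩, hxL⟩)
    · exact Or.inr (Or.inr (mem_iUnion.2 ⟨a, ⟨hxa, hx⟩, hxC⟩))
  refine ⟨B', n, hT', isClosed_towerRemainder hlev, ?_, U, hU, ?_, hdiam'⟩
  · calc μ (towerRemainder T B' n) ≤ μ (towerRemainder T B n) + μ L :=
          (measure_mono hR').trans (measure_union_le _ _)
      _ < ENNReal.ofReal ε :=
          lt_tsub_iff_left.1 (hμK.trans_le (ENNReal.half_le_self.trans (min_le_left _ _)))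
  · have hLM : μ (L ∪ M) < μ Xe - ENNReal.ofReal (1 - ε) :=
      calc μ (L ∪ M) ≤ μ L + μ M := measure_union_le _ _
        _ < δ / 2 + δ / 2 := ENNReal.add_lt_add hμK hμC
        _ = δ := ENNReal.add_halves δ
        _ ≤ _ := min_le_right _ _
    rw [← ENNReal.add_lt_add_iff_right (measure_ne_top μ (L ∪ M))]
    calc ENNReal.ofReal (1 - ε) + μ (L ∪ M) < μ Xe := lt_tsub_iff_left.1 hLM
      _ ≤ μ (U ∪ (L ∪ M)) := measure_mono hXeU
      _ ≤ μ U + μ (L ∪ M) := measure_union_le _ _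

theorem RankEpsLE.eventually_nhds {μ : ProbabilityMeasure α} (h : RankEpsLE (μ : Measure α) T ε k) :
    ∀ᶠ ν : ProbabilityMeasure α in 𝓝 μ, RankEpsLE (ν : Measure α) T ε k := by
  obtain ⟨B, n, hT, hRc, hR, U, hU, hμU, hdiam⟩ := h.exists_isOpen
  filter_upwards [ProbabilityMeasure.eventually_measure_lt_of_isClosed hRc hR,
    ProbabilityMeasure.eventually_lt_measure_of_isOpen hU hμU] with ν hνR hνU
  exact ⟨B, n, hT, hνR, U, hU.measurableSet, hνU, hdiam⟩

end Regularity

section RankEps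

variable {α : Type*} [PseudoMetricSpace α] [MeasurableSpace α] {μ : Measure α} {T : α → α}
  {ε : ℝ}

theorem rankEps_le_of_rankEpsLE {k : ℕ} (h : RankEpsLE μ T ε k) : rankEps μ T ε ≤ k :=
  sInf_le ⟨k, h, rfl⟩

theorem exists_rankEpsLE_eq_rankEps (h : rankEps μ T ε ≠ ⊤) :
    ∃ k : ℕ, RankEpsLE μ T ε k ∧ rankEps μ T ε = k := by
  refine csInf_mem (s := {c : ℕ∞ | ∃ k : ℕ, RankEpsLE μ T ε k ∧ c = k})
    (nonempty_iff_ne_empty.2 fun hS => h ?_)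
  rw [rankEps, hS, sInf_empty]

end RankEps

theorem rankEps_usc_general {X : Type*} [MetricSpace X] [CompactSpace X]
    [MeasurableSpace X] [BorelSpace X]
    (T : X ≃ₜ X) (ε : ℝ) :
    ∀ t : ℝ,
      IsOpen {μ : {ν : ProbabilityMeasure X // MeasurePreserving T ν.toMeasure ν.toMeasure} |
        (((rankEps μ.1.toMeasure T ε : ℕ∞) : ℝ≥0∞) : EReal) < (t : EReal)} := by
  intro t
  refine isOpen_iff_mem_nhds.2 fun μ hμ => ?_
  obtain ⟨k, hk, hμk⟩ := exists_rankEpsLE_eq_rankEps (μ := μ.1.toMeasure) (T := T) (ε := ε)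
    fun h => by simp [h] at hμ
  filter_upwards [continuous_subtype_val.continuousAt.eventually hk.eventually_nhds] with ν
    (hν : RankEpsLE ν.1.toMeasure T ε k)
  refine lt_of_le_of_lt ?_ hμ
  rw [hμk]
  exact_mod_cast rankEps_le_of_rankEpsLE hν

/-- For an invertible topological dynamical system (`T` a homeomorphism of a
compact metric space) and every `ε > 0`, the function `μ ↦ rank_ε(μ)` is upper
semicontinuous on the set `𝓜_T(X)` of invariant Borel probability measures with
the weak-star topology: every sublevel set `{μ : rank_ε(μ) < t}`, `t ∈ ℝ`, is open. -/
theorem rankEps_usc {X : Type*} [MetricSpace X] [CompactSpace X]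
    [MeasurableSpace X] [BorelSpace X]
    (T : X ≃ₜ X) (ε : ℝ) (hε : 0 < ε) :
    ∀ t : ℝ,
      IsOpen {μ : {ν : ProbabilityMeasure X // MeasurePreserving T ν.toMeasure ν.toMeasure} |
        (((rankEps μ.1.toMeasure T ε : ℕ∞) : ℝ≥0∞) : EReal) < (t : EReal)} :=
  rankEps_usc_general T ε
end
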